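/- arXiv:1803.08804 — 2 statements merged into one kernel-verified Lean document; each statement's English description precedes it below -/
import Mathlib

section
/- Let q be an element of a field of characteristic zero that is not a root of unity, let N ≥ 2 and h ≥ 1 be integers, and suppose that either h(N-1) = 1, or there exist t ∈ ℕ and s ∈ ℕ₀ such that (q₀ q^{1-h(N-1)})^{-t} = q₀² q^{h} where q₀ is a primitive N-th root of unity and the equality forces matching powers of q. Then either N = 2 and h ∈ {1, 2}, or N = 3 and h = 1. -/
/-!
Since `q₀ᴺ = 1`, the equation `(q₀ q^e)^{-t} = q₀² q^h` with `e = 1 - h(N-1)` says that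
`q^{et + h}` is an `N`-th root of unity; as `q` is not a root of unity, `et + h = 0`, i.e.
`t (h(N-1) - 1) = h`. Then `h(N-1) - 1` is a positive number at most `h`, which leaves only
`N = 3, h = 1` (with `t = 1`) and `N = 2, h = 2` (with `t = 2`); the other alternative
`h(N-1) = 1` is `N = 2, h = 1`.
-/

lemma eq_zero_of_zpow_eq_one_of_not_isOfFinOrder {G : Type*} [DivisionMonoid G] {q : G}
    (hq : ¬IsOfFinOrder q) {a : ℤ} (ha : q ^ a = 1) : a = 0 := by
  by_contra ha0
  exact hq (isOfFinOrder_iff_zpow_eq_one.mpr ⟨a, ha0, ha⟩)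

lemma zpow_pow_eq_one_of_inv_pow_eq {K : Type*} [CommGroupWithZero K] {ζ q : K} {N t h : ℕ}
    {e : ℤ} (hζ : ζ ^ N = 1) (hζ0 : ζ ≠ 0) (hq0 : q ≠ 0)
    (heq : ((ζ * q ^ e)⁻¹) ^ t = ζ ^ 2 * q ^ h) :
    (q ^ (e * t + h)) ^ N = 1 := by
  have hunit : ζ ^ (t + 2) * q ^ (e * t + h) = 1 :=
    calc ζ ^ (t + 2) * q ^ (e * t + h) = (ζ * q ^ e) ^ t * (ζ ^ 2 * q ^ h) := by
          rw [zpow_add₀ hq0, zpow_mul, zpow_natCast, zpow_natCast, mul_pow, pow_add,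
            mul_mul_mul_comm]
      _ = 1 := by
          rw [← heq, ← mul_pow, mul_inv_cancel₀ (mul_ne_zero hζ0 (zpow_ne_zero e hq0)),
            one_pow]
  have hζN : (ζ ^ (t + 2)) ^ N = 1 := by rw [← pow_mul, mul_comm, pow_mul, hζ, one_pow]
  simpa only [mul_pow, hζN, one_mul, one_pow] using congrArg (· ^ N) hunit

lemma eq_two_two_or_eq_three_one_of_mul_eq {t h N : ℕ} (ht : 0 < t) (hN : 2 ≤ N)
    (hth : (t : ℤ) * (h * ((N : ℤ) - 1) - 1) = h) :
    (N = 2 ∧ h = 2) ∨ (N = 3 ∧ h = 1) := by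
  obtain ⟨M, rfl⟩ : ∃ M, N = M + 2 := ⟨N - 2, by omega⟩
  push_cast at hth
  have hh : 0 < h := Nat.pos_of_ne_zero fun h0 => by subst h0; simp at hth; omega
  have hd : (h : ℤ) * (M + 1) - 1 ∣ h := ⟨t, by linarith⟩
  have hpos : 0 < (h : ℤ) * (M + 1) - 1 := by nlinarith
  have hle : (h : ℤ) * M ≤ 1 := by linarith [Int.le_of_dvd (by omega) hd]
  rcases Nat.eq_zero_or_pos M with rfl | hM
  · have h1 : (h : ℤ) - 1 ∣ 1 := by simpa using dvd_sub hd (dvd_refl _)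
    have := Int.eq_one_of_dvd_one (by simp at hpos; omega) h1
    omega
  · obtain ⟨rfl, rfl⟩ : h = 1 ∧ M = 1 := mul_eq_one.mp (by nlinarith)
    omega

theorem semigeneric_reflection_analysis_general {k : Type*} [Field k]
    (q q₀ : k) (hq0 : q ≠ 0) (hq : ∀ n : ℕ, 0 < n → q ^ n ≠ 1)
    (N : ℕ) (hN : 2 ≤ N) (hq₀ : IsPrimitiveRoot q₀ N)
    (h : ℕ)
    (hyp : h * (N - 1) = 1 ∨
      ∃ t : ℕ, 0 < t ∧
        ((q₀ * q ^ ((1 : ℤ) - (h : ℤ) * ((N : ℤ) - 1)))⁻¹) ^ t = q₀ ^ 2 * q ^ h) :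
    (N = 2 ∧ (h = 1 ∨ h = 2)) ∨ (N = 3 ∧ h = 1) := by
  rcases hyp with h1 | ⟨t, ht, heq⟩
  · obtain ⟨rfl, hN1⟩ := mul_eq_one.mp h1
    omega
  · have hq_inf : ¬IsOfFinOrder q := fun hfin =>
      let ⟨n, hn, hqn⟩ := isOfFinOrder_iff_pow_eq_one.mp hfin
      hq n hn hqn
    have hpow := zpow_pow_eq_one_of_inv_pow_eq hq₀.pow_eq_one (hq₀.ne_zero (by omega)) hq0 heq
    rw [← zpow_natCast, ← zpow_mul] at hpow
    have hexp := eq_zero_of_zpow_eq_one_of_not_isOfFinOrder hq_inf hpow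
    have hth : (t : ℤ) * (h * ((N : ℤ) - 1) - 1) = h := by
      have := (mul_eq_zero.mp hexp).resolve_right (by omega)
      linarith
    exact (eq_two_two_or_eq_three_one_of_mul_eq ht hN hth).imp_left
      fun ⟨hN2, hh2⟩ => ⟨hN2, Or.inr hh2⟩

/-- Scalar analysis underlying Lemma 3.3 of the paper: if `q₀` is a primitive `N`-th root of
unity (`N ≥ 2`), `q` is not a root of unity, `h ≥ 1`, and either `h(N-1) = 1` or
`(q₀ q^{1-h(N-1)})^{-t} = q₀² q^h` for some `t ≥ 1`, then `(N, h) ∈ {(2,1), (2,2), (3,1)}`. -/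
theorem semigeneric_reflection_analysis {k : Type*} [Field k] [CharZero k]
    (q q₀ : k) (hq0 : q ≠ 0) (hq : ∀ n : ℕ, 0 < n → q ^ n ≠ 1)
    (N : ℕ) (hN : 2 ≤ N) (hq₀ : IsPrimitiveRoot q₀ N)
    (h : ℕ) (hh : 1 ≤ h)
    (hyp : h * (N - 1) = 1 ∨
      ∃ t : ℕ, 0 < t ∧
        ((q₀ * q ^ ((1 : ℤ) - (h : ℤ) * ((N : ℤ) - 1)))⁻¹) ^ t = q₀ ^ 2 * q ^ h) :
    (N = 2 ∧ (h = 1 ∨ h = 2)) ∨ (N = 3 ∧ h = 1) :=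
  semigeneric_reflection_analysis_general q q₀ hq0 hq N hN hq₀ h hyp
end

section
/- Let B = ⊕_{n≥0} Bⁿ be a finitely generated graded algebra over a field with B⁰ the base field, and suppose there is a family (y_k)_{k≥1} of homogeneous elements and constants m, p ∈ ℕ with deg y_i ≤ m·i + p for all i, such that the ordered products y_{i₁} y_{i₂} ⋯ y_{i_l} over all finite strictly increasing index sequences i₁ < i₂ < ⋯ < i_l are linearly independent. Then the Gelfand–Kirillov dimension of B is infinite. -/
/-!
Choose a finite-dimensional subspace `V ∋ 1` containing every homogeneous component of a finite
generating set. Because `B⁰ = k·1 = V⁰`, induction over the algebra generated gives `Bʲ ⊆ Vʲ` for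
every degree `j`. An ordered monomial in `y₀, …, y_L` has degree at most `(m + p + 1)(L + 1)²`, so
the `2ᴸ` ordered monomials over subsets of `{0, …, L}` that contain `L` are linearly independent
elements of `V^((m + p + 1)(L + 1)²)`. Exponential growth along a quadratic subsequence beats every
power `n ↦ nᴹ`, hence `limsup log_n dim Vⁿ = ∞`.
-/

open scoped ENNReal

/-- The Gelfand–Kirillov dimension of a `k`-algebra `A`:
`GK(A) = ⨆_V limsup_n log_n dim((V)^n)`, the supremum running over all finitely generated
(equivalently, finite-dimensional) subspaces `V` of `A`. -/
noncomputable def gkDim (k A : Type*) [Field k] [Ring A] [Algebra k A] : ℝ≥0∞ :=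
  ⨆ (V : Submodule k A) (_ : V.FG),
    Filter.limsup
      (fun n : ℕ => ENNReal.ofReal (Real.logb n (Module.finrank k ↥(V ^ n))))
      Filter.atTop

open Filter Finset Module Submodule DirectSum

section Graded

variable {R A : Type*} [CommSemiring R] [Semiring A] [Algebra R A]
  (𝒜 : ℕ → Submodule R A) [GradedRing 𝒜]

theorem exists_fg_one_mem_forall_decompose_mem (S : Finset A) :
    ∃ V : Submodule R A, V.FG ∧ (1 : A) ∈ V ∧ ∀ s ∈ S, ∀ j, (decompose 𝒜 s j : A) ∈ V := by
  classical
  let T : Finset A :=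
    insert 1 (S.biUnion fun s => (decompose 𝒜 s).support.image fun j => (decompose 𝒜 s j : A))
  refine ⟨span R T, ⟨T, rfl⟩, subset_span (mem_insert_self _ _), fun s hs j => ?_⟩
  by_cases hj : j ∈ (decompose 𝒜 s).support
  · exact subset_span (mem_insert_of_mem (mem_biUnion.mpr ⟨s, hs, mem_image_of_mem _ hj⟩))
  · simp [DFinsupp.notMem_support_iff.mp hj]

variable {𝒜} {V : Submodule R A}

theorem coe_decompose_mul_mem_pow {a b : A} (ha : ∀ j, (decompose 𝒜 a j : A) ∈ V ^ j)
    (hb : ∀ j, (decompose 𝒜 b j : A) ∈ V ^ j) (j : ℕ) :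
    (decompose 𝒜 (a * b) j : A) ∈ V ^ j := by
  classical
  rw [decompose_mul, coe_mul_apply]
  refine sum_mem fun uv huv => ?_
  obtain ⟨-, rfl⟩ := mem_filter.mp huv
  rw [pow_add]
  exact mul_mem_mul (ha _) (hb _)

theorem coe_decompose_mem_pow_of_adjoin_eq_top (h0 : 𝒜 0 = 1) {S : Set A}
    (hS : Algebra.adjoin R S = ⊤) (hV1 : (1 : A) ∈ V)
    (hSV : ∀ s ∈ S, ∀ j, (decompose 𝒜 s j : A) ∈ V) (b : A) (j : ℕ) :
    (decompose 𝒜 b j : A) ∈ V ^ j := by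
  have hdeg0 (x : A) : (decompose 𝒜 x 0 : A) ∈ V ^ 0 := pow_zero V ▸ h0 ▸ (decompose 𝒜 x 0).2
  have hb : b ∈ Algebra.adjoin R S := hS ▸ Algebra.mem_top
  induction hb using Algebra.adjoin_induction generalizing j with
  | mem s hs =>
    rcases j with _ | j
    · exact hdeg0 s
    · exact le_self_pow (one_le.mpr hV1) j.succ_ne_zero (hSV s hs _)
  | algebraMap r =>
    rcases j with _ | j
    · exact hdeg0 _
    · rw [decompose_of_mem_ne 𝒜 (SetLike.algebraMap_mem_graded 𝒜 r) j.succ_ne_zero.symm]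
      exact zero_mem _
  | add a b _ _ ha hb =>
    rw [decompose_add, DirectSum.add_apply, AddMemClass.coe_add]
    exact add_mem (ha j) (hb j)
  | mul a b _ _ ha hb => exact coe_decompose_mul_mem_pow ha hb j

theorem le_pow_of_adjoin_eq_top (h0 : 𝒜 0 = 1) {S : Set A} (hS : Algebra.adjoin R S = ⊤)
    (hV1 : (1 : A) ∈ V) (hSV : ∀ s ∈ S, ∀ j, (decompose 𝒜 s j : A) ∈ V) (j : ℕ) :
    𝒜 j ≤ V ^ j := fun x hx =>
  decompose_of_mem_same 𝒜 hx ▸ coe_decompose_mem_pow_of_adjoin_eq_top h0 hS hV1 hSV x j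

end Graded

theorem prod_map_sort_mem_graded {M σ ι α : Type*} [Monoid M] [SetLike σ M] [AddCommMonoid ι]
    {𝒜 : ι → σ} [SetLike.GradedMonoid 𝒜] [LinearOrder α] {y : α → M} {d : α → ι}
    (hy : ∀ i, y i ∈ 𝒜 (d i)) (s : Finset α) :
    ((s.sort (· ≤ ·)).map y).prod ∈ 𝒜 (∑ i ∈ s, d i) := by
  have h := SetLike.list_prod_map_mem_graded (s.sort (· ≤ ·)) d y fun i _ => hy i
  rwa [((s.sort_perm_toList _).map d).sum_eq, sum_map_toList] at h

theorem sum_le_mul_sq_of_subset_range {d : ℕ → ℕ} {m p : ℕ} (hd : ∀ i, d i ≤ m * i + p)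
    {L : ℕ} {s : Finset ℕ} (hs : s ⊆ range (L + 1)) :
    ∑ i ∈ s, d i ≤ (m + p + 1) * (L + 1) ^ 2 := by
  calc ∑ i ∈ s, d i ≤ ∑ i ∈ range (L + 1), d i := sum_le_sum_of_subset hs
    _ ≤ ∑ _i ∈ range (L + 1), (m + p + 1) * (L + 1) := by
      refine sum_le_sum fun i hi => (hd i).trans ?_
      have hiL : i ≤ L := Nat.lt_succ_iff.mp (mem_range.mp hi)
      nlinarith
    _ = (m + p + 1) * (L + 1) ^ 2 := by rw [sum_const, card_range, smul_eq_mul]; ring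

theorem two_pow_le_finrank_of_linearIndependent {k M : Type*} [Field k] [AddCommGroup M]
    [Module k M] {f : {s : Finset ℕ // s.Nonempty} → M} (hf : LinearIndependent k f)
    {W : Submodule k M} [Module.Finite k W] (L : ℕ)
    (hW : ∀ s : {s : Finset ℕ // s.Nonempty}, s.1 ⊆ range (L + 1) → f s ∈ W) :
    2 ^ L ≤ finrank k W := by
  -- Inserting `L` makes every subset of `{0, …, L - 1}` nonempty without losing injectivity.
  let e (t : Finset (Fin L)) : {s : Finset ℕ // s.Nonempty} :=
    ⟨insert L (t.map Fin.valEmbedding), insert_nonempty _ _⟩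
  have hL (t : Finset (Fin L)) : L ∉ t.map Fin.valEmbedding := by
    simpa using fun x _ => x.isLt.ne
  have he : Function.Injective e := by
    intro t₁ t₂ h
    have h' := congrArg (fun s => s.1.erase L) h
    simp only [e, erase_insert (hL _)] at h'
    exact map_injective _ h'
  have hspan : span k (Set.range (f ∘ e)) ≤ W := by
    refine span_le.mpr (Set.range_subset_iff.mpr fun t => hW _ fun i hi => ?_)
    simp only [e, Finset.mem_insert, Finset.mem_map] at hi
    rcases hi with rfl | ⟨j, -, rfl⟩ <;> simp
  calc 2 ^ L = Fintype.card (Finset (Fin L)) := by simp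
    _ = finrank k (span k (Set.range (f ∘ e))) := (finrank_span_eq_card (hf.comp e he)).symm
    _ ≤ finrank k W := finrank_mono hspan

theorem eventually_pow_le_two_pow (c M : ℕ) :
    ∀ᶠ L : ℕ in atTop, (c * (L + 1) ^ 2) ^ M ≤ 2 ^ L := by
  have hlim := ((tendsto_pow_const_div_const_pow_of_one_lt (2 * M) one_lt_two).comp
    (tendsto_add_atTop_nat 1)).const_mul ((c : ℝ) ^ M * 2)
  filter_upwards [hlim.eventually (gt_mem_nhds (by simp : (c : ℝ) ^ M * 2 * 0 < 1))] with L hL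
  simp only [Function.comp_apply] at hL
  rw [mul_div_assoc', div_lt_one (by positivity), pow_succ] at hL
  rw [← Nat.cast_le (α := ℝ)]
  push_cast at hL ⊢
  rw [mul_pow, ← pow_mul]
  linarith

theorem frequently_pow_le_of_two_pow_le {g : ℕ → ℕ} {c : ℕ} (hc : 0 < c)
    (hg : ∀ L, 2 ^ L ≤ g (c * (L + 1) ^ 2)) (M : ℕ) : ∃ᶠ n in atTop, n ^ M ≤ g n := by
  refine frequently_atTop.mpr fun N => ?_
  obtain ⟨L, hpow, hNL⟩ := ((eventually_pow_le_two_pow c M).and (eventually_ge_atTop N)).exists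
  exact ⟨c * (L + 1) ^ 2, by nlinarith, hpow.trans (hg L)⟩

theorem limsup_logb_eq_top_of_frequently_pow_le {g : ℕ → ℕ}
    (hg : ∀ M : ℕ, ∃ᶠ n in atTop, n ^ M ≤ g n) :
    limsup (fun n : ℕ => ENNReal.ofReal (Real.logb n (g n))) atTop = ⊤ := by
  refine eq_top_iff.mpr (ENNReal.iSup_natCast ▸ iSup_le fun M => ?_)
  refine le_limsup_of_frequently_le' (((hg M).and_eventually (eventually_ge_atTop 2)).mono ?_)
  rintro n ⟨hpow, hn⟩
  have hn' : (1 : ℝ) < n := by exact_mod_cast hn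
  have hg_pos : (0 : ℝ) < g n := by exact_mod_cast (Nat.pow_pos (by omega)).trans_le hpow
  rw [← ENNReal.ofReal_natCast]
  refine ENNReal.ofReal_le_ofReal ((Real.le_logb_iff_rpow_le hn' hg_pos).mpr ?_)
  rw [Real.rpow_natCast]
  exact_mod_cast hpow

/-- Lemma 2.1 of the paper (after Rosso): let `B = ⊕_{n≥0} Bⁿ` be a finitely generated
graded algebra over a field with `B⁰ = k·1`. If there is a family `(y_i)` of homogeneous
elements with `deg y_i ≤ m·i + p` such that the ordered products
`y_{i₁} ⋯ y_{i_l}` (`i₁ < ⋯ < i_l`) are linearly independent, then `GK(B) = ∞`. -/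
theorem gkDim_infinite_of_ordered_monomials {k B : Type*} [Field k] [Ring B] [Algebra k B]
    (𝒜 : ℕ → Submodule k B) [GradedRing 𝒜]
    (h0 : 𝒜 0 = Submodule.span k {(1 : B)})
    (hfg : Algebra.FiniteType k B)
    (y : ℕ → B) (d : ℕ → ℕ) (hy : ∀ i, y i ∈ 𝒜 (d i))
    (m p : ℕ) (hd : ∀ i, d i ≤ m * i + p)
    (hli : LinearIndependent k
      (fun s : {s : Finset ℕ // s.Nonempty} => ((s.1.sort (· ≤ ·)).map y).prod)) :
    gkDim k B = ⊤ := by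
  obtain ⟨S, hS⟩ := hfg.out
  obtain ⟨V, hVfg, hV1, hSV⟩ := exists_fg_one_mem_forall_decompose_mem 𝒜 S
  have h𝒜V := le_pow_of_adjoin_eq_top (h0.trans one_eq_span.symm) hS hV1 hSV
  have hdim (L : ℕ) : 2 ^ L ≤ finrank k ↥(V ^ ((m + p + 1) * (L + 1) ^ 2)) := by
    have : Module.Finite k ↥(V ^ ((m + p + 1) * (L + 1) ^ 2)) :=
      Module.Finite.iff_fg.mpr (hVfg.pow _)
    refine two_pow_le_finrank_of_linearIndependent hli L fun s hs => ?_
    exact pow_right_monotone (one_le.mpr hV1) (sum_le_mul_sq_of_subset_range hd hs)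
      (h𝒜V _ (prod_map_sort_mem_graded hy s.1))
  have hlimsup := limsup_logb_eq_top_of_frequently_pow_le
    (frequently_pow_le_of_two_pow_le (g := fun n => finrank k ↥(V ^ n)) (m + p).succ_pos hdim)
  unfold gkDim
  exact eq_top_iff.mpr (le_iSup₂_of_le V hVfg hlimsup.ge)
end
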